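/- With the setup of the Vorob'ev quantile Q_ρ = {x : p_Γ(x) ≥ ρ}: for any measurable M with μ(M) = μ(Q_ρ), the difference of expected symmetric-difference measures satisfies E[μ(M Δ Γ)] − E[μ(Q_ρ Δ Γ)] = 2(∫_{Q_ρ \ M} p_Γ dμ − ∫_{M \ Q_ρ} p_Γ dμ) ≥ 2ρ(μ(Q_ρ \ M) − μ(M \ Q_ρ)) = 0. -/

import Mathlib

/-!
By Tonelli (Robbins' formula), `E μ(A ∆ Γ) = ∫ P(x ∈ A ∆ Γ) dμ`, and pointwise
`P(x ∈ A ∆ Γ) + 2·1_A p_Γ = 1_A + p_Γ`, so `E μ(A ∆ Γ) + 2 ∫_A p_Γ = μ(A) + ∫ p_Γ`.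
Comparing `A = M` and `A = Q`, which have equal measure, the common part `∫_{M ∩ Q} p_Γ` cancels
and the identity follows. As `p_Γ ≥ ρ` on `Q \ M`, `p_Γ < ρ` on `M \ Q`, and these two sets have
equal measure, `∫_{M \ Q} p_Γ ≤ ρ μ(M \ Q) = ρ μ(Q \ M) ≤ ∫_{Q \ M} p_Γ`.
-/

open MeasureTheory Set
open scoped ENNReal symmDiff

namespace MeasureTheory

theorem setLIntegral_sdiff_superlevelSet_le {X : Type*} [MeasurableSpace X] {μ : Measure X}
    [IsFiniteMeasure μ] {f : X → ℝ≥0∞} (hf : Measurable f) (ρ : ℝ≥0∞) {M : Set X}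
    (hM : MeasurableSet M) (hμM : μ M = μ {x | ρ ≤ f x}) :
    ∫⁻ x in M \ {x | ρ ≤ f x}, f x ∂μ ≤ ∫⁻ x in {x | ρ ≤ f x} \ M, f x ∂μ := by
  have hQ : MeasurableSet {x | ρ ≤ f x} := measurableSet_le measurable_const hf
  calc ∫⁻ x in M \ {x | ρ ≤ f x}, f x ∂μ ≤ ∫⁻ _ in M \ {x | ρ ≤ f x}, ρ ∂μ :=
        setLIntegral_mono measurable_const fun x hx => (not_le.1 hx.2).le
    _ = ∫⁻ _ in {x | ρ ≤ f x} \ M, ρ ∂μ := by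
        rw [setLIntegral_const, setLIntegral_const, measure_sdiff_symm hM.nullMeasurableSet
          hQ.nullMeasurableSet hμM (measure_ne_top _ _)]
    _ ≤ _ := setLIntegral_mono hf fun x hx => hx.1

variable {X Ω : Type*} [MeasurableSpace Ω]

def coverage (P : Measure Ω) (Γ : Ω → Set X) (x : X) : ℝ≥0∞ := P {ω | x ∈ Γ ω}

variable {P : Measure Ω} {Γ : Ω → Set X}

theorem coverage_le_one [IsProbabilityMeasure P] (x : X) : coverage P Γ x ≤ 1 :=
  prob_le_one

variable [MeasurableSpace X]

theorem measurable_coverage [SFinite P] (hΓ : MeasurableSet {q : Ω × X | q.2 ∈ Γ q.1}) :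
    Measurable (coverage P Γ) :=
  measurable_measure_prodMk_right hΓ

theorem lintegral_coverage_ne_top [IsProbabilityMeasure P] (ν : Measure X) [IsFiniteMeasure ν] :
    ∫⁻ x, coverage P Γ x ∂ν ≠ ∞ :=
  ((lintegral_mono coverage_le_one).trans_lt (lintegral_const_lt_top ENNReal.one_ne_top)).ne

/-- Robbins' formula. -/
theorem lintegral_measure_eq_lintegral_coverage [SFinite P] (ν : Measure X) [SFinite ν]
    (hΓ : MeasurableSet {q : Ω × X | q.2 ∈ Γ q.1}) :
    ∫⁻ ω, ν (Γ ω) ∂P = ∫⁻ x, coverage P Γ x ∂ν :=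
  (Measure.prod_apply hΓ).symm.trans (Measure.prod_apply_symm hΓ)

theorem measurableSet_mem_symmDiff {A : Set X} (hA : MeasurableSet A)
    (hΓ : MeasurableSet {q : Ω × X | q.2 ∈ Γ q.1}) :
    MeasurableSet {q : Ω × X | q.2 ∈ A ∆ Γ q.1} :=
  (measurable_snd hA).symmDiff hΓ

theorem coverage_symmDiff_add_two_mul_indicator [IsProbabilityMeasure P]
    (hΓ : MeasurableSet {q : Ω × X | q.2 ∈ Γ q.1}) (A : Set X) (x : X) :
    coverage P (fun ω => A ∆ Γ ω) x + 2 * A.indicator (coverage P Γ) x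
      = A.indicator 1 x + coverage P Γ x := by
  have hx : MeasurableSet {ω | x ∈ Γ ω} := hΓ.preimage measurable_prodMk_right
  by_cases hxA : x ∈ A
  · have hcompl : {ω | x ∈ A ∆ Γ ω} = {ω | x ∈ Γ ω}ᶜ := by
      ext ω; simp [Set.mem_symmDiff, hxA]
    simp only [coverage, hcompl, indicator_of_mem hxA, Pi.one_apply]
    rw [two_mul, ← add_assoc, add_comm (P _ᶜ), prob_add_prob_compl hx]
  · have hsame : {ω | x ∈ A ∆ Γ ω} = {ω | x ∈ Γ ω} := by
      ext ω; simp [Set.mem_symmDiff, hxA]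
    simp [coverage, hsame, hxA]

theorem lintegral_measure_symmDiff_add_two_mul [IsProbabilityMeasure P] (μ : Measure X)
    [SFinite μ] (hΓ : MeasurableSet {q : Ω × X | q.2 ∈ Γ q.1}) {A : Set X}
    (hA : MeasurableSet A) :
    ∫⁻ ω, μ (A ∆ Γ ω) ∂P + 2 * ∫⁻ x in A, coverage P Γ x ∂μ
      = μ A + ∫⁻ x, coverage P Γ x ∂μ := by
  rw [lintegral_measure_eq_lintegral_coverage μ (measurableSet_mem_symmDiff hA hΓ),
    ← lintegral_indicator hA, ← lintegral_const_mul _ ((measurable_coverage hΓ).indicator hA),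
    ← lintegral_add_left (measurable_coverage (measurableSet_mem_symmDiff hA hΓ)),
    ← lintegral_indicator_one hA, ← lintegral_add_left (measurable_one.indicator hA)]
  exact lintegral_congr (coverage_symmDiff_add_two_mul_indicator hΓ A)

theorem lintegral_measure_symmDiff_add_two_mul_sdiff [IsProbabilityMeasure P] (μ : Measure X)
    [IsFiniteMeasure μ] (hΓ : MeasurableSet {q : Ω × X | q.2 ∈ Γ q.1}) {A B : Set X}
    (hA : MeasurableSet A) (hB : MeasurableSet B) (hAB : μ A = μ B) :
    ∫⁻ ω, μ (A ∆ Γ ω) ∂P + 2 * ∫⁻ x in A \ B, coverage P Γ x ∂μ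
      = ∫⁻ ω, μ (B ∆ Γ ω) ∂P + 2 * ∫⁻ x in B \ A, coverage P Γ x ∂μ := by
  have hfin : 2 * ∫⁻ x in A ∩ B, coverage P Γ x ∂μ ≠ ∞ :=
    ENNReal.mul_ne_top ENNReal.ofNat_ne_top (lintegral_coverage_ne_top _)
  rw [← ENNReal.add_left_inj hfin]
  calc _ = ∫⁻ ω, μ (A ∆ Γ ω) ∂P + 2 * ∫⁻ x in A, coverage P Γ x ∂μ := by
        rw [add_assoc, ← mul_add, add_comm _ (∫⁻ _ in A ∩ B, _ ∂μ),
          lintegral_inter_add_sdiff _ _ hB]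
    _ = ∫⁻ ω, μ (B ∆ Γ ω) ∂P + 2 * ∫⁻ x in B, coverage P Γ x ∂μ := by
        rw [lintegral_measure_symmDiff_add_two_mul μ hΓ hA,
          lintegral_measure_symmDiff_add_two_mul μ hΓ hB, hAB]
    _ = _ := by
        rw [add_assoc, ← mul_add, inter_comm, add_comm _ (∫⁻ _ in B ∩ A, _ ∂μ),
          lintegral_inter_add_sdiff _ _ hA]

theorem toReal_lintegral_measure_symmDiff_sub [IsProbabilityMeasure P] (μ : Measure X)
    [IsFiniteMeasure μ] (hΓ : MeasurableSet {q : Ω × X | q.2 ∈ Γ q.1}) {A B : Set X}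
    (hA : MeasurableSet A) (hB : MeasurableSet B) (hAB : μ A = μ B) :
    (∫⁻ ω, μ (A ∆ Γ ω) ∂P).toReal - (∫⁻ ω, μ (B ∆ Γ ω) ∂P).toReal
      = 2 * ((∫⁻ x in B \ A, coverage P Γ x ∂μ).toReal
        - (∫⁻ x in A \ B, coverage P Γ x ∂μ).toReal) := by
  have hE : ∀ C, MeasurableSet C → ∫⁻ ω, μ (C ∆ Γ ω) ∂P ≠ ∞ := fun C hC => by
    rw [lintegral_measure_eq_lintegral_coverage μ (measurableSet_mem_symmDiff hC hΓ)]
    exact lintegral_coverage_ne_top μ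
  have hI : ∀ C, 2 * ∫⁻ x in C, coverage P Γ x ∂μ ≠ ∞ := fun _ =>
    ENNReal.mul_ne_top ENNReal.ofNat_ne_top (lintegral_coverage_ne_top _)
  have h := congrArg ENNReal.toReal
    (lintegral_measure_symmDiff_add_two_mul_sdiff (P := P) μ hΓ hA hB hAB)
  simp only [ENNReal.toReal_add (hE _ hA) (hI _), ENNReal.toReal_add (hE _ hB) (hI _),
    ENNReal.toReal_mul, ENNReal.toReal_ofNat] at h
  linarith

end MeasureTheory

theorem vorobev_quantile_difference_identity_general
    {X : Type*} [MeasurableSpace X] (μ : Measure X) [IsFiniteMeasure μ]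
    {Ω : Type*} [MeasurableSpace Ω] (P : Measure Ω) [IsProbabilityMeasure P]
    (Γ : Ω → Set X)
    (hΓ : MeasurableSet {p : Ω × X | p.2 ∈ Γ p.1})
    (p : X → ℝ≥0∞) (hp : ∀ x, p x = P {ω | x ∈ Γ ω})
    (ρ : ℝ≥0∞)
    (Q : Set X) (hQ : Q = {x | ρ ≤ p x})
    (M : Set X) (hM : MeasurableSet M) (hμM : μ M = μ Q) :
    (∫⁻ ω, μ (M ∆ Γ ω) ∂P).toReal - (∫⁻ ω, μ (Q ∆ Γ ω) ∂P).toReal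
      = 2 * ((∫⁻ x in Q \ M, p x ∂μ).toReal - (∫⁻ x in M \ Q, p x ∂μ).toReal) ∧
    2 * ((∫⁻ x in Q \ M, p x ∂μ).toReal - (∫⁻ x in M \ Q, p x ∂μ).toReal)
      ≥ 2 * ρ.toReal * ((μ (Q \ M)).toReal - (μ (M \ Q)).toReal) ∧
    2 * ρ.toReal * ((μ (Q \ M)).toReal - (μ (M \ Q)).toReal) = 0 := by
  obtain rfl : p = coverage P Γ := funext hp
  have hpm : Measurable (coverage P Γ) := measurable_coverage hΓ
  have hQm : MeasurableSet Q := hQ ▸ measurableSet_le measurable_const hpm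
  have hsdiff : μ (Q \ M) = μ (M \ Q) :=
    measure_sdiff_symm hQm.nullMeasurableSet hM.nullMeasurableSet hμM.symm (measure_ne_top _ _)
  have hle : ∫⁻ x in M \ Q, coverage P Γ x ∂μ ≤ ∫⁻ x in Q \ M, coverage P Γ x ∂μ := by
    subst hQ; exact setLIntegral_sdiff_superlevelSet_le hpm ρ hM hμM
  have hle_real := ENNReal.toReal_mono (lintegral_coverage_ne_top _) hle
  refine ⟨toReal_lintegral_measure_symmDiff_sub μ hΓ hM hQm hμM, ?_, by rw [hsdiff]; ring⟩
  rw [hsdiff, sub_self, mul_zero]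
  linarith

/-- Quantitative version: the difference of expected symmetric-difference measures equals
`2(∫_{Q\M} p dμ − ∫_{M\Q} p dμ)`, which is bounded below by `2ρ(μ(Q\M) − μ(M\Q)) = 0`. -/
theorem vorobev_quantile_difference_identity
    {X : Type*} [MeasurableSpace X] (μ : Measure X) [IsFiniteMeasure μ]
    {Ω : Type*} [MeasurableSpace Ω] (P : Measure Ω) [IsProbabilityMeasure P]
    (Γ : Ω → Set X)
    (hΓ : MeasurableSet {p : Ω × X | p.2 ∈ Γ p.1})
    (p : X → ℝ≥0∞) (hp : ∀ x, p x = P {ω | x ∈ Γ ω})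
    (ρ : ℝ≥0∞) (hρ : ρ ≤ 1)
    (Q : Set X) (hQ : Q = {x | ρ ≤ p x})
    (M : Set X) (hM : MeasurableSet M) (hμM : μ M = μ Q) :
    (∫⁻ ω, μ (M ∆ Γ ω) ∂P).toReal - (∫⁻ ω, μ (Q ∆ Γ ω) ∂P).toReal
      = 2 * ((∫⁻ x in Q \ M, p x ∂μ).toReal - (∫⁻ x in M \ Q, p x ∂μ).toReal) ∧
    2 * ((∫⁻ x in Q \ M, p x ∂μ).toReal - (∫⁻ x in M \ Q, p x ∂μ).toReal)
      ≥ 2 * ρ.toReal * ((μ (Q \ M)).toReal - (μ (M \ Q)).toReal) ∧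
    2 * ρ.toReal * ((μ (Q \ M)).toReal - (μ (M \ Q)).toReal) = 0 :=
  vorobev_quantile_difference_identity_general μ P Γ hΓ p hp ρ Q hQ M hM hμM
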